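/- With the fusion trace maps Tr(δ) = εδε + e_{12}δe_{21} on double derivations and Tr(ω) = εωε + e_{12}ωe_{21} on 2-forms (for A⁺ with matrix units e_{ij} and ε = 1 - e_2), one has ι_{Tr(δ)}(Tr(ω)) = Tr(ι_δ(ω)) for all ω ∈ Ω²_{R⁺}(A⁺) and δ ∈ D_{A⁺/R⁺}. -/

import Mathlib

open scoped TensorProduct

section

variable {k : Type*} [Field k] {A : Type*} [Ring A] [Algebra k A]
  {Ω : Type*} [Ring Ω] [Algebra k Ω]

/-- Sweedler-type evaluation: for `t = ∑ x ⊗ y` this returns `∑ ι(y) * w * ι(x)`. -/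
noncomputable def sweedler (ι : A →ₐ[k] Ω) (w : Ω) : A ⊗[k] A →ₗ[k] Ω :=
  TensorProduct.lift
    (LinearMap.mk₂ k (fun x y => ι y * w * ι x)
      (fun _ _ _ => by simp [map_add, mul_add])
      (fun _ _ _ => by simp [map_smul, mul_smul_comm])
      (fun _ _ _ => by simp [map_add, add_mul])
      (fun _ _ _ => by simp [map_smul, smul_mul_assoc]))

/-- `(a δ b)(c) = δ(c)' b ⊗ a δ(c)''`: the inner bimodule action on double derivations. -/
noncomputable def innerTwist (a b : A) (δ : A →ₗ[k] A ⊗[k] A) : A →ₗ[k] A ⊗[k] A :=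
  (TensorProduct.map (LinearMap.mulRight k b) (LinearMap.mulLeft k a)) ∘ₗ δ

/-- The contraction
`ι_δ(p dq dr s) = δ(q)''·dr·s·p·δ(q)' − δ(r)''·s·p·dq·δ(r)'`
of a double derivation `δ` against the noncommutative `2`-form `p dq dr s`. -/
noncomputable def contractForm2' (ι : A →ₐ[k] Ω) (d : A →ₗ[k] Ω)
    (δ : A →ₗ[k] A ⊗[k] A) (p q r s : A) : Ω :=
  sweedler ι (d r * ι s * ι p) (δ q) - sweedler ι (ι s * ι p * d q) (δ r)

end

/-!
Contraction is bimodule-linear in the double derivation, so `ι_{Tr δ} = ε ι_δ ε + e₁₂ ι_δ e₂₁`.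
On the form side, the contraction of `p dq dr s` only depends on `s p`, so contracting
`Tr(p dq dr)` amounts to contracting `(ε ε p + e₂₁ e₁₂ p) dq dr = p dq dr`.
-/

namespace ContractForm2

variable {k : Type*} [Field k] {A : Type*} [Ring A] [Algebra k A]
  {Ω : Type*} [Ring Ω] [Algebra k Ω] (ι : A →ₐ[k] Ω)

theorem sweedler_tmul (w : Ω) (x y : A) : sweedler ι w (x ⊗ₜ[k] y) = ι y * w * ι x := rfl

theorem sweedler_add_left (w₁ w₂ : Ω) (t : A ⊗[k] A) :
    sweedler ι (w₁ + w₂) t = sweedler ι w₁ t + sweedler ι w₂ t := by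
  induction t using TensorProduct.induction_on with
  | zero => simp only [map_zero, add_zero]
  | tmul x y => simp only [sweedler_tmul, mul_add, add_mul]
  | add t₁ t₂ h₁ h₂ => simp only [map_add, h₁, h₂, add_add_add_comm]

theorem sweedler_map_mulRight_mulLeft (w : Ω) (a b : A) (t : A ⊗[k] A) :
    sweedler ι w (TensorProduct.map (LinearMap.mulRight k b) (LinearMap.mulLeft k a) t) =
      ι a * sweedler ι w t * ι b := by
  induction t using TensorProduct.induction_on with
  | zero => simp only [map_zero, mul_zero, zero_mul]
  | tmul x y =>
    simp only [TensorProduct.map_tmul, LinearMap.mulRight_apply, LinearMap.mulLeft_apply,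
      sweedler_tmul, map_mul, mul_assoc]
  | add t₁ t₂ h₁ h₂ => simp only [map_add, h₁, h₂, mul_add, add_mul]

variable (d : A →ₗ[k] Ω)

theorem contractForm2'_add_derivation (δ₁ δ₂ : A →ₗ[k] A ⊗[k] A) (p q r s : A) :
    contractForm2' ι d (δ₁ + δ₂) p q r s =
      contractForm2' ι d δ₁ p q r s + contractForm2' ι d δ₂ p q r s := by
  simp only [contractForm2', LinearMap.add_apply, map_add]
  abel

theorem contractForm2'_innerTwist (a b : A) (δ : A →ₗ[k] A ⊗[k] A) (p q r s : A) :
    contractForm2' ι d (innerTwist a b δ) p q r s = ι a * contractForm2' ι d δ p q r s * ι b := by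
  simp only [contractForm2', innerTwist, LinearMap.comp_apply, sweedler_map_mulRight_mulLeft,
    mul_sub, sub_mul]

theorem contractForm2'_eq_mul_one (δ : A →ₗ[k] A ⊗[k] A) (p q r s : A) :
    contractForm2' ι d δ p q r s = contractForm2' ι d δ (s * p) q r 1 := by
  simp only [contractForm2', map_mul, map_one, mul_one, one_mul, mul_assoc]

theorem contractForm2'_add_left (δ : A →ₗ[k] A ⊗[k] A) (p₁ p₂ q r s : A) :
    contractForm2' ι d δ (p₁ + p₂) q r s =
      contractForm2' ι d δ p₁ q r s + contractForm2' ι d δ p₂ q r s := by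
  simp only [contractForm2', map_add, mul_add, add_mul, sweedler_add_left]
  abel

end ContractForm2

open ContractForm2 in
theorem contraction_commutes_with_trace
    {k : Type*} [Field k] {A : Type*} [Ring A] [Algebra k A]
    {Ω : Type*} [Ring Ω] [Algebra k Ω]
    (ι : A →ₐ[k] Ω) (d : A →ₗ[k] Ω)
    (ε e12 e21 : A)
    (hε : ε * ε = ε)
    (hdec : (1 : A) = ε + e21 * e12)
    (δ : A →ₗ[k] A ⊗[k] A)
    (p q r : A) :
    contractForm2' ι d (innerTwist ε ε δ + innerTwist e12 e21 δ) (ε * p) q r ε +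
      contractForm2' ι d (innerTwist ε ε δ + innerTwist e12 e21 δ) (e12 * p) q r e21 =
    ι ε * contractForm2' ι d δ p q r 1 * ι ε +
      ι e12 * contractForm2' ι d δ p q r 1 * ι e21 := by
  have trace_decomposition : ε * (ε * p) + e21 * (e12 * p) = p := by
    rw [← mul_assoc, ← mul_assoc, hε, ← add_mul, ← hdec, one_mul]
  have form_trace :
      contractForm2' ι d δ (ε * p) q r ε + contractForm2' ι d δ (e12 * p) q r e21 =
        contractForm2' ι d δ p q r 1 := by
    rw [contractForm2'_eq_mul_one ι d δ (ε * p), contractForm2'_eq_mul_one ι d δ (e12 * p),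
      ← contractForm2'_add_left, trace_decomposition]
  simp only [contractForm2'_add_derivation, contractForm2'_innerTwist, ← form_trace, mul_add,
    add_mul]
  abel
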